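/- Let G = (V,E) be a directed mixed graph and α, β ∈ V. If there exists a directed inducing path from α to β in G, then the DMG G⁺ obtained from G by adding the directed edge α→β satisfies I(G⁺) = I(G). -/

import Mathlib

/-!
Directed mixed graphs (DMGs) with μ-separation, following
Mogensen & Hansen, "Markov equivalence of marginalized local independence graphs".
-/

universe u

/-- A directed mixed graph on node set `V`: a set of directed edges (`dir a b`
meaning `a → b`) and a set of bidirected edges (`bi`, a symmetric relation since
bidirected edges are unordered pairs).  Loops are allowed. -/
structure DMG (V : Type u) where
  dir : V → V → Prop
  bi : V → V → Prop
  bi_symm : ∀ a b, bi a b → bi b a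

namespace DMG

variable {V : Type u}

/-- A single step of a walk: an edge instance together with the direction in
which it is traversed (this records, in particular, orientations of loops).
A directed edge has a tail at its source and a head at its target; a bidirected
edge has heads at both endpoints. -/
inductive Step (G : DMG V) : V → V → Type u
  | dirF : ∀ {a b : V}, G.dir a b → Step G a b
  | dirB : ∀ {a b : V}, G.dir b a → Step G a b
  | bid  : ∀ {a b : V}, G.bi a b → Step G a b

/-- Whether the step has a head (edge mark) at its start node. -/
def Step.headStart {G : DMG V} : ∀ {a b : V}, Step G a b → Bool
  | _, _, .dirF _ => false
  | _, _, .dirB _ => true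
  | _, _, .bid _ => true

/-- Whether the step has a head (edge mark) at its end node. -/
def Step.headEnd {G : DMG V} : ∀ {a b : V}, Step G a b → Bool
  | _, _, .dirF _ => true
  | _, _, .dirB _ => false
  | _, _, .bid _ => true

/-- The step traverses a bidirected edge. -/
def Step.IsBid {G : DMG V} {a b : V} : Step G a b → Prop
  | .bid _ => True
  | _ => False

/-- The step traverses a directed edge, forwards. -/
def Step.IsDirF {G : DMG V} {a b : V} : Step G a b → Prop
  | .dirF _ => True
  | _ => False

/-- The underlying edge of a step: a directed edge is the ordered pair
(tail, head); a bidirected edge is the unordered pair of its endpoints. -/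
def Step.edge {G : DMG V} : ∀ {a b : V}, Step G a b → (V × V) ⊕ (Sym2 V)
  | a, b, .dirF _ => Sum.inl (a, b)
  | a, b, .dirB _ => Sum.inl (b, a)
  | a, b, .bid _ => Sum.inr s(a, b)

/-- A walk in a DMG: an alternating sequence of nodes and edges, each edge
between its neighbouring nodes, with a chosen orientation of each edge
(in particular of each directed loop). -/
inductive Walk (G : DMG V) : V → V → Type u
  | nil (a : V) : Walk G a a
  | cons {a b c : V} (s : Step G a b) (w : Walk G b c) : Walk G a c

namespace Walk

variable {G : DMG V}

/-- A nontrivial walk contains at least one edge. -/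
def Nontrivial : ∀ {a b : V}, Walk G a b → Prop
  | _, _, .nil _ => False
  | _, _, .cons _ _ => True

/-- The list of nodes of a walk, in order (with multiplicity). -/
def nodes : ∀ {a b : V}, Walk G a b → List V
  | a, _, .nil _ => [a]
  | a, _, .cons _ w => a :: w.nodes

/-- The non-endpoint (internal) nodes of a walk, in order (with multiplicity). -/
def interior {a b : V} (w : Walk G a b) : List V :=
  (w.nodes.dropLast).drop 1

/-- The list of edges of a walk. -/
def edges : ∀ {a b : V}, Walk G a b → List ((V × V) ⊕ (Sym2 V))
  | _, _, .nil _ => []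
  | _, _, .cons s w => s.edge :: w.edges

/-- Whether the first edge of the walk has a head at the first node
(`false` for a trivial walk). -/
def firstHead : ∀ {a b : V}, Walk G a b → Bool
  | _, _, .nil _ => false
  | _, _, .cons s _ => s.headStart

/-- Whether the last edge of the walk has a head at the last node
(`false` for a trivial walk). -/
def lastHead : ∀ {a b : V}, Walk G a b → Bool
  | _, _, .nil _ => false
  | _, _, .cons s (.nil _) => s.headEnd
  | _, _, .cons _ (.cons t w) => lastHead (Walk.cons t w)

/-- Helper: conditions at all remaining internal node instances of a walk,
where `h` records whether the edge arriving at the current start node has a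
head there.  A node instance is a collider if both adjoining edges have a
head at it; a collider must lie in `Anc`, a noncollider must avoid `C`. -/
def openFrom (C Anc : Set V) : ∀ {a b : V}, Bool → Walk G a b → Prop
  | _, _, _, .nil _ => True
  | a, _, h, .cons s w =>
      (if h && s.headStart then a ∈ Anc else a ∉ C) ∧ openFrom C Anc s.headEnd w

/-- Helper: every remaining internal node instance which is a collider lies in `S`. -/
def collInFrom (S : Set V) : ∀ {a b : V}, Bool → Walk G a b → Prop
  | _, _, _, .nil _ => True
  | a, _, h, .cons s w =>
      ((h && s.headStart) = true → a ∈ S) ∧ collInFrom S s.headEnd w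

/-- Every collider (internal node instance with heads on both sides) of the
walk lies in `S`. -/
def CollidersIn (S : Set V) : ∀ {a b : V}, Walk G a b → Prop
  | _, _, .nil _ => True
  | _, _, .cons s w => collInFrom S s.headEnd w

/-- The walk has no colliders. -/
def NoColliders {a b : V} (w : Walk G a b) : Prop :=
  w.CollidersIn ∅

/-- Helper: every remaining internal node instance is a collider. -/
def allCollFrom : ∀ {a b : V}, Bool → Walk G a b → Prop
  | _, _, _, .nil _ => True
  | _, _, h, .cons s w => (h && s.headStart) = true ∧ allCollFrom s.headEnd w

/-- Every internal node instance of the walk is a collider (no noncolliders). -/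
def AllColliders : ∀ {a b : V}, Walk G a b → Prop
  | _, _, .nil _ => True
  | _, _, .cons s w => allCollFrom s.headEnd w

/-- Every edge of the walk is bidirected. -/
def AllBid : ∀ {a b : V}, Walk G a b → Prop
  | _, _, .nil _ => True
  | _, _, .cons s w => s.IsBid ∧ w.AllBid

/-- The walk consists of a directed first edge (pointing forwards) followed by
bidirected edges only (the form `α → β` or `α → γ₁ ↔ ⋯ ↔ γₙ ↔ β`). -/
def UniForm : ∀ {a b : V}, Walk G a b → Prop
  | _, _, .nil _ => False
  | _, _, .cons s w => s.IsDirF ∧ w.AllBid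

end Walk

/-- `a` is an ancestor of `b`: there is a (possibly trivial) directed path
from `a` to `b`. -/
def anc (G : DMG V) (a b : V) : Prop := Relation.ReflTransGen G.dir a b

/-- The set of ancestors of nodes of `C`. -/
def anSet (G : DMG V) (C : Set V) : Set V := {a | ∃ c ∈ C, G.anc a c}

/-- The walk is μ-connecting given `C`: it is nontrivial, its first node is not
in `C`, every collider lies in `An(C)`, no noncollider lies in `C`, and its
final edge has a head at the final node. -/
def Walk.MuConn {G : DMG V} (C : Set V) : ∀ {a b : V}, Walk G a b → Prop
  | _, _, .nil _ => False
  | a, _, .cons s w =>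
      a ∉ C ∧ Walk.openFrom C (G.anSet C) s.headEnd w ∧ (Walk.cons s w).lastHead = true

/-- `B` is μ-separated from `A` given `C` in `G`: there is no μ-connecting
walk from any node of `A` to any node of `B` given `C`. -/
def muSep (G : DMG V) (A B C : Set V) : Prop :=
  ∀ ⦃a b : V⦄, a ∈ A → b ∈ B → ∀ w : Walk G a b, ¬ w.MuConn C

/-- Two DMGs on the same node set are Markov equivalent: they induce the same
independence model via μ-separation, i.e. `I(G₁) = I(G₂)`. -/
def MarkovEq (G₁ G₂ : DMG V) : Prop :=
  ∀ A B C : Set V, muSep G₁ A B C ↔ muSep G₂ A B C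

/-- `b` is separable from `a` in `I(G)`: there is `C ⊆ V ∖ {a}` with
`⟨{a},{b} | C⟩ ∈ I(G)`. -/
def separable (G : DMG V) (a b : V) : Prop :=
  ∃ C : Set V, a ∉ C ∧ muSep G {a} {b} C

/-- `a ∈ u(b, I(G))`: `b` is inseparable from `a` in `I(G)`. -/
def inU (G : DMG V) (a b : V) : Prop := ¬ G.separable a b

/-- `G₁` is a subgraph of `G₂` (same node set, edge-set inclusion). -/
def Sub (G₁ G₂ : DMG V) : Prop :=
  (∀ a b, G₁.dir a b → G₂.dir a b) ∧ (∀ a b, G₁.bi a b → G₂.bi a b)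

/-- The DMG obtained by adding the directed edge `a → b`. -/
def addDir (G : DMG V) (a b : V) : DMG V where
  dir x y := G.dir x y ∨ (x = a ∧ y = b)
  bi := G.bi
  bi_symm := G.bi_symm

/-- The DMG obtained by adding the bidirected edge `a ↔ b`. -/
def addBi (G : DMG V) (a b : V) : DMG V where
  dir := G.dir
  bi x y := G.bi x y ∨ (x = a ∧ y = b) ∨ (x = b ∧ y = a)
  bi_symm x y h := by
    rcases h with h | h | h
    · exact Or.inl (G.bi_symm _ _ h)
    · exact Or.inr (Or.inr ⟨h.2, h.1⟩)
    · exact Or.inr (Or.inl ⟨h.2, h.1⟩)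

/-- The DMG obtained by removing the directed edge `a → b`. -/
def removeDir (G : DMG V) (a b : V) : DMG V where
  dir x y := G.dir x y ∧ ¬(x = a ∧ y = b)
  bi := G.bi
  bi_symm := G.bi_symm

/-- The DMG obtained by removing the bidirected edge `a ↔ b`. -/
def removeBi (G : DMG V) (a b : V) : DMG V where
  dir := G.dir
  bi x y := G.bi x y ∧ ¬((x = a ∧ y = b) ∨ (x = b ∧ y = a))
  bi_symm x y h := ⟨G.bi_symm _ _ h.1, fun hc => h.2 (by tauto)⟩

/-- The complete DMG: all directed and all bidirected edges present. -/
def IsComplete (G : DMG V) : Prop :=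
  (∀ a b, G.dir a b) ∧ (∀ a b, G.bi a b)

/-- A DMG is maximal if it is complete, or adding any (absent) edge changes the
induced independence model. -/
def IsMaximal (G : DMG V) : Prop :=
  G.IsComplete ∨
    ∀ a b : V, (¬ G.dir a b → ¬ MarkovEq (G.addDir a b) G) ∧
      (¬ G.bi a b → ¬ MarkovEq (G.addBi a b) G)

end DMG
namespace DMG

variable {V : Type u}

/-- An inducing path from `a` to `b`: a nontrivial path or cycle from `a` to
`b` with a head at `b`, with no noncolliders, and on which every node is an
ancestor of `a` or of `b`. -/
def IsInducingPath (G : DMG V) {a b : V} (w : Walk G a b) : Prop :=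
  w.Nontrivial ∧
  (w.nodes.Nodup ∨ (a = b ∧ w.nodes.dropLast.Nodup)) ∧
  w.lastHead = true ∧
  w.AllColliders ∧
  ∀ x ∈ w.nodes, G.anc x a ∨ G.anc x b

/-- A bidirected inducing path: an inducing path all of whose edges are bidirected. -/
def IsBidirectedIP (G : DMG V) {a b : V} (w : Walk G a b) : Prop :=
  G.IsInducingPath w ∧ w.AllBid

/-- A directed inducing path: an inducing path of the form `α → β` or
`α → γ₁ ↔ ⋯ ↔ γₙ ↔ β` with every `γᵢ` an ancestor of `β`. -/
def IsDirectedIP (G : DMG V) {a b : V} (w : Walk G a b) : Prop :=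
  G.IsInducingPath w ∧ w.UniForm ∧ ∀ x ∈ w.interior, G.anc x b

/-- There exists a nontrivial walk in `G` between `x` and `y` with no
colliders, all non-endpoint nodes in `M`, and with edge marks `hs` at `x`
(`true` = head) and `he` at `y`. -/
def ConnThrough (G : DMG V) (M : Set V) (x y : V) (hs he : Bool) : Prop :=
  ∃ w : Walk G x y, w.Nontrivial ∧ w.NoColliders ∧
    (∀ z ∈ w.interior, z ∈ M) ∧ w.firstHead = hs ∧ w.lastHead = he

/-- The latent projection `m(G, O)` of `G` on `O`: the DMG on node set `O`
having an edge (with given endpoint marks) between `α` and `β` if and only if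
`G` contains a nontrivial endpoint-identical walk between `α` and `β` with no
colliders and all non-endpoint nodes in `M = V ∖ O`. -/
def latentProj (G : DMG V) (O : Set V) : DMG {x : V // x ∈ O} where
  dir x y := ConnThrough G Oᶜ x.1 y.1 false true
  bi x y := ConnThrough G Oᶜ x.1 y.1 true true ∨ ConnThrough G Oᶜ y.1 x.1 true true
  bi_symm x y h := h.symm

/-- `x` is directedly collider-connected to `b`: there is a nontrivial walk
from `x` to `b` with a head at `b` on which every non-endpoint node is a
collider. -/
def dirCollConn (G : DMG V) (x b : V) : Prop :=
  ∃ w : Walk G x b, w.Nontrivial ∧ w.AllColliders ∧ w.lastHead = true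

/-- The set `D(a,b)` of nodes in `An({a,b})` directedly collider-connected to
`b`, except `a`. -/
def Dset (G : DMG V) (a b : V) : Set V :=
  {x | x ∈ G.anSet {a, b} ∧ G.dirCollConn x b} \ {a}

/-- `a` and `b` are potential siblings in the independence model `I(G)`. -/
def PotSib (G : DMG V) (a b : V) : Prop :=
  (G.inU b a ∧ G.inU a b) ∧
  (∀ (γ : V) (C : Set V), b ∈ C → muSep G {γ} {a} C → muSep G {γ} {b} C) ∧
  (∀ (γ : V) (C : Set V), a ∈ C → muSep G {γ} {b} C → muSep G {γ} {a} C)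

/-- `a` is a potential parent of `b` in the independence model `I(G)`. -/
def PotPar (G : DMG V) (a b : V) : Prop :=
  G.inU a b ∧
  (∀ (γ : V) (C : Set V), a ∉ C → muSep G {γ} {b} C → muSep G {γ} {a} C) ∧
  (∀ (γ δ : V) (C : Set V), a ∉ C → b ∈ C →
    muSep G {γ} {δ} C → muSep G {γ} {b} C ∨ muSep G {a} {δ} C) ∧
  (∀ (γ : V) (C : Set V), a ∉ C → muSep G {b} {γ} C → muSep G {b} {γ} (C ∪ {a}))

/-- The graph `N(I(G))`: directed edge `a → b` present iff `a` is a potential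
parent of `b` in `I(G)`, bidirected edge `a ↔ b` present iff `a` and `b` are
potential siblings in `I(G)` (potential siblinghood is symmetric). -/
def NGraph (G : DMG V) : DMG V where
  dir a b := G.PotPar a b
  bi a b := G.PotSib a b ∨ G.PotSib b a
  bi_symm _ _ h := h.symm

/-- A path is m-connecting given `C` if it is a path (no repeated nodes), no
noncollider on it is in `C` and every collider on it is in `An(C)`. -/
def Walk.MConn {G : DMG V} (C : Set V) : ∀ {a b : V}, Walk G a b → Prop
  | _, _, .nil _ => True
  | _, _, .cons s w =>
      (Walk.cons s w).nodes.Nodup ∧ Walk.openFrom C (G.anSet C) s.headEnd w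

/-- `A` and `B` are m-separated by `C`: there is no m-connecting path between
a node of `A` and a node of `B` given `C`. -/
def mSep (G : DMG V) (A B C : Set V) : Prop :=
  ∀ ⦃a b : V⦄, a ∈ A → b ∈ B →
    (∀ w : Walk G a b, ¬ w.MConn C) ∧ (∀ w : Walk G b a, ¬ w.MConn C)

/-- Auxiliary directed-edge relation of the `B`-history version of `G`. -/
def histDir (G : DMG V) (B : Set V) : (V ⊕ {x : V // x ∈ B}) → (V ⊕ {x : V // x ∈ B}) → Prop
  | .inl u, .inl v => G.dir u v
  | .inl u, .inr v => G.dir u v.1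
  | _, _ => False

/-- Auxiliary bidirected-edge relation of the `B`-history version of `G`. -/
def histBi (G : DMG V) (B : Set V) : (V ⊕ {x : V // x ∈ B}) → (V ⊕ {x : V // x ∈ B}) → Prop
  | .inl u, .inl v => G.bi u v
  | .inl u, .inr v => G.bi u v.1
  | .inr u, .inl v => G.bi u.1 v
  | .inr _, .inr _ => False

/-- The `B`-history version `G(B)` of `G`: node set `V ⊔ Bᵖ`, whose subgraph
on `V` is `G`, with additionally `α ↔ βᵖ` whenever `α ↔ β` in `G` and
`α → βᵖ` whenever `α → β` in `G` (for `α ∈ V`, `β ∈ B`). -/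
def hist (G : DMG V) (B : Set V) : DMG (V ⊕ {x : V // x ∈ B}) where
  dir := G.histDir B
  bi := G.histBi B
  bi_symm x y h := by
    cases x <;> cases y <;>
      simp only [histBi] at h ⊢ <;>
      first
        | exact G.bi_symm _ _ h
        | exact h

end DMG

/-!
Write the directed inducing path as `a → γ₁ ↔ ⋯ ↔ γₙ ↔ b`; every `γᵢ` is an ancestor of
`b`. Given `C`, follow the path as long as its nodes lie in `An(C)` (there they are harmless
colliders); at the first `γᵢ ∉ An(C)` switch to a directed path from `γᵢ` to `b`, which
avoids `C` because it stays outside `An(C)`. This yields a walk of `G` from `a` to `b`, with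
a tail at `a` and a head at `b`, whose interior satisfies the μ-connection conditions, so it
can stand in for every occurrence of the new edge `a → b` on a μ-connecting walk of `G⁺`.
Conversely every walk of `G` is one of `G⁺`, and since `a ∈ An(b)` both graphs have the
same ancestor sets.
-/

namespace DMG

variable {V : Type u}

namespace Step

variable {G : DMG V}

def symm : ∀ {x y : V}, Step G x y → Step G y x
  | _, _, .dirF e => .dirB e
  | _, _, .dirB e => .dirF e
  | _, _, .bid e => .bid (G.bi_symm _ _ e)

@[simp] lemma headStart_symm : ∀ {x y : V} (s : Step G x y), s.symm.headStart = s.headEnd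
  | _, _, .dirF _ | _, _, .dirB _ | _, _, .bid _ => rfl

@[simp] lemma headEnd_symm : ∀ {x y : V} (s : Step G x y), s.symm.headEnd = s.headStart
  | _, _, .dirF _ | _, _, .dirB _ | _, _, .bid _ => rfl

def map {G₁ G₂ : DMG V} (h : Sub G₁ G₂) : ∀ {x y : V}, Step G₁ x y → Step G₂ x y
  | _, _, .dirF e => .dirF (h.1 _ _ e)
  | _, _, .dirB e => .dirB (h.1 _ _ e)
  | _, _, .bid e => .bid (h.2 _ _ e)

@[simp] lemma headStart_map {G₁ G₂ : DMG V} (h : Sub G₁ G₂) :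
    ∀ {x y : V} (s : Step G₁ x y), (s.map h).headStart = s.headStart
  | _, _, .dirF _ | _, _, .dirB _ | _, _, .bid _ => rfl

@[simp] lemma headEnd_map {G₁ G₂ : DMG V} (h : Sub G₁ G₂) :
    ∀ {x y : V} (s : Step G₁ x y), (s.map h).headEnd = s.headEnd
  | _, _, .dirF _ | _, _, .dirB _ | _, _, .bid _ => rfl

end Step

namespace Walk

variable {G : DMG V} {x y z : V}

def append : ∀ {x y z : V}, Walk G x y → Walk G y z → Walk G x z
  | _, _, _, .nil _, w => w
  | _, _, _, .cons s u, w => .cons s (u.append w)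

def reverse : ∀ {x y : V}, Walk G x y → Walk G y x
  | _, _, .nil x => .nil x
  | _, _, .cons s u => u.reverse.append (.cons s.symm (.nil _))

/-- The mark of the last edge at the last node; `h` for the trivial walk. -/
def endMark : ∀ {x y : V}, Bool → Walk G x y → Bool
  | _, _, h, .nil _ => h
  | _, _, _, .cons s u => u.endMark s.headEnd

def InteriorOpen (C An : Set V) : ∀ {x y : V}, Walk G x y → Prop
  | _, _, .nil _ => True
  | _, _, .cons s u => u.openFrom C An s.headEnd

lemma endMark_append (h : Bool) (w₁ : Walk G x y) (w₂ : Walk G y z) :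
    (w₁.append w₂).endMark h = w₂.endMark (w₁.endMark h) := by
  induction w₁ generalizing h with
  | nil => rfl
  | cons s u ih => exact ih _ _

lemma openFrom_append (C An : Set V) (h : Bool) (w₁ : Walk G x y) (w₂ : Walk G y z) :
    (w₁.append w₂).openFrom C An h ↔
      w₁.openFrom C An h ∧ w₂.openFrom C An (w₁.endMark h) := by
  induction w₁ generalizing h with
  | nil => exact ⟨fun hw => ⟨trivial, hw⟩, And.right⟩
  | cons s u ih => exact (and_congr_right fun _ => ih _ _).trans and_assoc.symm

lemma lastHead_cons {m : V} (s : Step G x m) (u : Walk G m y) :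
    (cons s u).lastHead = u.endMark s.headEnd := by
  induction u generalizing x with
  | nil => rfl
  | cons t v ih => exact ih t

lemma lastHead_eq_endMark (w : Walk G x y) : w.lastHead = w.endMark false := by
  cases w with
  | nil => rfl
  | cons s u => exact lastHead_cons s u

lemma firstHead_append_of_nontrivial {w₁ : Walk G x y} (hw : w₁.Nontrivial)
    (w₂ : Walk G y z) : (w₁.append w₂).firstHead = w₁.firstHead := by
  cases w₁ with
  | nil => exact hw.elim
  | cons s u => rfl

lemma nontrivial_append_cons {w : V} (u : Walk G x y) (t : Step G y z) (v : Walk G z w) :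
    (u.append (cons t v)).Nontrivial := by
  cases u <;> trivial

lemma nontrivial_reverse {w : Walk G x y} (hw : w.Nontrivial) : w.reverse.Nontrivial := by
  cases w with
  | nil => exact hw.elim
  | cons s u => exact nontrivial_append_cons _ _ _

lemma lastHead_reverse (w : Walk G x y) : w.reverse.lastHead = w.firstHead := by
  cases w with
  | nil => rfl
  | cons s u =>
      rw [reverse, lastHead_eq_endMark, endMark_append]
      exact Step.headEnd_symm s

lemma firstHead_reverse (w : Walk G x y) : w.reverse.firstHead = w.lastHead := by
  induction w with
  | nil => rfl
  | cons s u ih =>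
      cases u with
      | nil => exact Step.headStart_symm s
      | cons t v =>
          have hrev := nontrivial_reverse (w := cons t v) trivial
          rw [reverse, firstHead_append_of_nontrivial hrev, ih]
          rfl

lemma interiorOpen_append_single {C An : Set V} {w : Walk G x y} (hw : w.Nontrivial)
    (t : Step G y z) :
    (w.append (cons t (nil z))).InteriorOpen C An ↔
      w.InteriorOpen C An ∧ (if w.lastHead && t.headStart then y ∈ An else y ∉ C) := by
  cases w with
  | nil => exact hw.elim
  | cons s u =>
      change (u.append _).openFrom C An s.headEnd ↔ u.openFrom C An s.headEnd ∧ _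
      rw [openFrom_append, lastHead_cons]
      exact and_congr_right fun _ => ⟨And.left, fun hy => ⟨hy, trivial⟩⟩

lemma interiorOpen_reverse {C An : Set V} {w : Walk G x y} (hw : w.InteriorOpen C An) :
    w.reverse.InteriorOpen C An := by
  induction w with
  | nil => trivial
  | cons s u ih =>
      cases u with
      | nil => trivial
      | cons t v =>
          obtain ⟨hm, hrest⟩ := hw
          have hrev := nontrivial_reverse (w := cons t v) trivial
          refine (interiorOpen_append_single hrev _).2 ⟨ih hrest, ?_⟩
          rwa [lastHead_reverse, Step.headStart_symm, Bool.and_comm]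

lemma muConn_iff (C : Set V) (w : Walk G x y) :
    w.MuConn C ↔ w.openFrom C (G.anSet C) false ∧ w.lastHead = true := by
  cases w with
  | nil => exact ⟨False.elim, fun h => Bool.false_ne_true h.2⟩
  | cons s u => exact and_assoc.symm

/-- Substituting `r` for `s` in a walk preserves the μ-connection conditions. -/
def Replaces {G' : DMG V} (C An : Set V) (r : Walk G x y) (s : Step G' x y) : Prop :=
  r.Nontrivial ∧ r.firstHead = s.headStart ∧ r.lastHead = s.headEnd ∧ r.InteriorOpen C An

lemma Replaces.reverse {G' : DMG V} {C An : Set V} {r : Walk G x y} {s : Step G' x y}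
    (h : r.Replaces C An s) : r.reverse.Replaces C An s.symm := by
  obtain ⟨hN, hF, hL, hI⟩ := h
  exact ⟨nontrivial_reverse hN, by rw [firstHead_reverse, hL, Step.headStart_symm],
    by rw [lastHead_reverse, hF, Step.headEnd_symm], interiorOpen_reverse hI⟩

lemma exists_replaces_of_sub {G' : DMG V} {C An : Set V} (h : Sub G' G) ⦃x y : V⦄
    (s : Step G' x y) : ∃ r : Walk G x y, r.Replaces C An s :=
  ⟨cons (s.map h) (nil y), trivial, Step.headStart_map h s, Step.headEnd_map h s, trivial⟩

lemma exists_of_forall_replaces {G' : DMG V} {C An : Set V}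
    (hrep : ∀ ⦃x y : V⦄ (s : Step G' x y), ∃ r : Walk G x y, r.Replaces C An s)
    (w : Walk G' x y) : ∃ w' : Walk G x y,
      (∀ h, w'.endMark h = w.endMark h) ∧ ∀ h, w.openFrom C An h → w'.openFrom C An h := by
  induction w with
  | nil => exact ⟨nil _, fun _ => rfl, fun _ => id⟩
  | cons s v ih =>
      obtain ⟨v', hend, hopen⟩ := ih
      obtain ⟨_ | ⟨s₀, u₀⟩, hN, hF, hL, hI⟩ := hrep s
      · exact hN.elim
      rw [lastHead_cons] at hL
      refine ⟨(cons s₀ u₀).append v', fun h => ?_, fun h ⟨hx, hv⟩ => ?_⟩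
      · rw [endMark_append]
        exact (congrArg (endMark · v') hL).trans (hend _)
      · rw [openFrom_append]
        refine ⟨⟨?_, hI⟩, ?_⟩
        · rwa [show s₀.headStart = s.headStart from hF]
        · change v'.openFrom C An (u₀.endMark s₀.headEnd)
          rw [hL]
          exact hopen _ hv

end Walk

theorem muSep_of_forall_replaces {G G' : DMG V} {A B C : Set V}
    (hAn : G'.anSet C = G.anSet C)
    (hrep : ∀ ⦃x y : V⦄ (s : Step G' x y), ∃ r : Walk G x y, r.Replaces C (G.anSet C) s)
    (hsep : G.muSep A B C) : G'.muSep A B C := by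
  intro x y hx hy w hw
  rw [Walk.muConn_iff, hAn] at hw
  obtain ⟨w', hend, hopen⟩ := Walk.exists_of_forall_replaces hrep w
  refine hsep hx hy w' ((Walk.muConn_iff C w').2 ⟨hopen false hw.1, ?_⟩)
  rw [Walk.lastHead_eq_endMark, hend, ← Walk.lastHead_eq_endMark]
  exact hw.2

lemma sub_addDir (G : DMG V) (a b : V) : Sub G (G.addDir a b) :=
  ⟨fun _ _ => Or.inl, fun _ _ => id⟩

section addDir

variable {G : DMG V} {a b : V}

lemma anc_addDir_iff (hab : G.anc a b) {x y : V} : (G.addDir a b).anc x y ↔ G.anc x y := by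
  refine ⟨fun h => ?_, fun h => Relation.ReflTransGen.mono (G.sub_addDir a b).1 _ _ h⟩
  induction h with
  | refl => exact .refl
  | tail _ hxy ih =>
      rcases hxy with hxy | ⟨rfl, rfl⟩
      · exact ih.tail hxy
      · exact ih.trans hab

lemma anSet_addDir (hab : G.anc a b) (C : Set V) : (G.addDir a b).anSet C = G.anSet C := by
  simp only [anSet, anc_addDir_iff hab]

end addDir

section inducingPath

variable {G : DMG V} {C : Set V}

lemma Walk.start_mem_nodes {x y : V} (w : Walk G x y) : x ∈ w.nodes := by
  cases w <;> exact List.mem_cons_self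

lemma Walk.nodes_eq_dropLast_append {x y : V} (w : Walk G x y) :
    w.nodes = w.nodes.dropLast ++ [y] := by
  induction w with
  | nil => rfl
  | cons s u ih =>
      change _ :: u.nodes = (_ :: u.nodes).dropLast ++ _
      rw [ih, ← List.cons_append, List.dropLast_concat]

lemma Walk.interior_cons {x m y : V} (s : Step G x m) (u : Walk G m y) :
    (cons s u).interior = u.nodes.dropLast := by
  change ((x :: u.nodes).dropLast).drop 1 = _
  rw [u.nodes_eq_dropLast_append, ← List.cons_append, List.dropLast_concat, List.dropLast_concat]
  rfl

lemma exists_openFrom_of_anc {g b : V} (hgb : G.anc g b) (hg : g ∉ G.anSet C) :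
    ∃ r : Walk G g b, r.openFrom C (G.anSet C) true ∧ r.endMark true = true := by
  induction hgb using Relation.ReflTransGen.head_induction_on with
  | refl => exact ⟨.nil _, trivial, rfl⟩
  | @head g v hgv _ ih =>
      obtain ⟨r, hr, hend⟩ := ih fun ⟨c, hc, hvc⟩ => hg ⟨c, hc, .head hgv hvc⟩
      exact ⟨.cons (.dirF hgv) r, ⟨fun hgC => hg ⟨g, hgC, .refl⟩, hr⟩, hend⟩

lemma exists_openFrom_of_allBid {g b : V} (u : Walk G g b) (hu : u.AllBid)
    (hanc : ∀ x ∈ u.nodes, G.anc x b) :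
    ∃ r : Walk G g b, r.openFrom C (G.anSet C) true ∧ r.endMark true = true := by
  induction u with
  | nil => exact ⟨.nil _, trivial, rfl⟩
  | @cons g _ _ s u ih =>
      cases s with
      | dirF _ | dirB _ => exact hu.1.elim
      | bid e =>
          obtain ⟨hg, hanc⟩ := List.forall_mem_cons.1 hanc
          by_cases hgC : g ∈ G.anSet C
          · obtain ⟨r, hr, hend⟩ := ih hu.2 hanc
            exact ⟨.cons (.bid e) r, ⟨hgC, hr⟩, hend⟩
          · exact exists_openFrom_of_anc hg hgC

variable {a b : V} {w : Walk G a b}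

lemma IsDirectedIP.exists_eq_cons (hw : G.IsDirectedIP w) :
    ∃ (m : V) (_ : G.dir a m) (u : Walk G m b), u.AllBid ∧ ∀ x ∈ u.nodes, G.anc x b := by
  obtain ⟨-, huni, hint⟩ := hw
  cases w with
  | nil => exact huni.elim
  | cons s u =>
      cases s with
      | dirB _ | bid _ => exact huni.1.elim
      | dirF e =>
          refine ⟨_, e, u, huni.2, fun x hx => ?_⟩
          rw [u.nodes_eq_dropLast_append, List.mem_append, List.mem_singleton] at hx
          rcases hx with hx | rfl
          · exact hint x ((Walk.interior_cons _ u).symm ▸ hx)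
          · exact .refl

lemma IsDirectedIP.anc (hw : G.IsDirectedIP w) : G.anc a b :=
  let ⟨m, e, u, _, hanc⟩ := hw.exists_eq_cons
  .head e (hanc m u.start_mem_nodes)

lemma IsDirectedIP.exists_replaces (hw : G.IsDirectedIP w) (C : Set V)
    (e : (G.addDir a b).dir a b) : ∃ r : Walk G a b, r.Replaces C (G.anSet C) (.dirF e) := by
  obtain ⟨m, e', u, hu, hanc⟩ := hw.exists_eq_cons
  obtain ⟨r, hr, hend⟩ := exists_openFrom_of_allBid (C := C) u hu hanc
  exact ⟨.cons (.dirF e') r, trivial, rfl, (Walk.lastHead_cons _ r).trans hend, hr⟩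

lemma IsDirectedIP.exists_replaces_addDir (hw : G.IsDirectedIP w) (C : Set V) :
    ∀ ⦃x y : V⦄ (s : Step (G.addDir a b) x y), ∃ r : Walk G x y, r.Replaces C (G.anSet C) s
  | _, _, .dirF (.inl e) => ⟨.cons (.dirF e) (.nil _), trivial, rfl, rfl, trivial⟩
  | _, _, .dirB (.inl e) => ⟨.cons (.dirB e) (.nil _), trivial, rfl, rfl, trivial⟩
  | _, _, .bid e => ⟨.cons (.bid e) (.nil _), trivial, rfl, rfl, trivial⟩
  | _, _, .dirF (.inr ⟨rfl, rfl⟩) => hw.exists_replaces C _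
  | _, _, .dirB (.inr ⟨rfl, rfl⟩) =>
      let ⟨r, hr⟩ := hw.exists_replaces C (.inr ⟨rfl, rfl⟩)
      ⟨r.reverse, hr.reverse⟩

end inducingPath

end DMG

theorem stmt10_general {V : Type u} (G : DMG V) (a b : V)
    (h : ∃ w : DMG.Walk G a b, G.IsDirectedIP w) :
    DMG.MarkovEq (G.addDir a b) G := by
  obtain ⟨w, hw⟩ := h
  intro A B C
  have hAn := DMG.anSet_addDir hw.anc C
  exact ⟨DMG.muSep_of_forall_replaces hAn.symm
      (DMG.Walk.exists_replaces_of_sub (G.sub_addDir a b)),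
    DMG.muSep_of_forall_replaces hAn (hw.exists_replaces_addDir C)⟩

/-- Proposition 9: if there is a directed inducing path
from `a` to `b` in `G`, then adding the directed edge `a → b` does not change
the independence model: `I(G⁺) = I(G)`. -/
theorem stmt10 {V : Type u} [Fintype V] (G : DMG V) (a b : V)
    (h : ∃ w : DMG.Walk G a b, G.IsDirectedIP w) :
    DMG.MarkovEq (G.addDir a b) G :=
  stmt10_general G a b h
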